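/- arXiv:1406.2465 — 4 statements merged into one kernel-verified Lean document; each statement's English description precedes it below -/
import Mathlib

section
/- For the Riemannian submersion p: (P,g) → (M,h) given by a principal r-torus bundle with metric g = Σ b_{ij}θᵢ⊗θⱼ + p*h, the O'Neill tensor T vanishes (the fibers are totally geodesic) and the O'Neill tensor A is given by A_E F = Σ_{i,j} b^{ij} ( g(E, TᵢF) ξʲ + g(ξⁱ, F) TⱼE ) for all vector fields E, F on P. -/
open scoped BigOperators

/-- An abstract model of the differential-geometric data on a manifold:
`F` plays the role of the ring of smooth functions (an `ℝ`-algebra),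
`V` the `F`-module of vector fields, `D` the derivation action of vector
fields on functions, `bracket` the Lie bracket, `g` a Riemannian metric and
`conn` its Levi-Civita connection. -/
structure RiemSetup (F V : Type) [CommRing F] [Algebra ℝ F]
    [AddCommGroup V] [Module F V] where
  D : V → F → F
  bracket : V → V → V
  g : V → V → F
  conn : V → V → V
  D_add : ∀ (X : V) (f₁ f₂ : F), D X (f₁ + f₂) = D X f₁ + D X f₂
  D_mul : ∀ (X : V) (f₁ f₂ : F), D X (f₁ * f₂) = D X f₁ * f₂ + f₁ * D X f₂
  D_const : ∀ (X : V) (r : ℝ), D X (algebraMap ℝ F r) = 0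
  D_add_vec : ∀ (X Y : V) (f : F), D (X + Y) f = D X f + D Y f
  D_smul_vec : ∀ (f : F) (X : V) (f' : F), D (f • X) f' = f * D X f'
  g_symm : ∀ X Y, g X Y = g Y X
  g_add_left : ∀ X Y Z, g (X + Y) Z = g X Z + g Y Z
  g_smul_left : ∀ (f : F) (X Y : V), g (f • X) Y = f * g X Y
  g_nondeg : ∀ Z, (∀ X, g X Z = 0) → Z = 0
  conn_add_left : ∀ X Y Z, conn (X + Y) Z = conn X Z + conn Y Z
  conn_smul_left : ∀ (f : F) (X Y : V), conn (f • X) Y = f • conn X Y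
  conn_add_right : ∀ X Y Z, conn X (Y + Z) = conn X Y + conn X Z
  conn_leibniz : ∀ (X : V) (f : F) (Y : V), conn X (f • Y) = f • conn X Y + D X f • Y
  compat : ∀ X Y Z, D X (g Y Z) = g (conn X Y) Z + g Y (conn X Z)
  torsion_free : ∀ X Y, conn X Y - conn Y X = bracket X Y

namespace RiemSetup

variable {F V : Type} [CommRing F] [Algebra ℝ F] [AddCommGroup V] [Module F V]

/-- The covariant derivative `(∇_X K)(Y,Z)` of a `(0,2)`-tensor `K`. -/
def nabla2 (S : RiemSetup F V) (K : V → V → F) (X Y Z : V) : F :=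
  S.D X (K Y Z) - K (S.conn X Y) Z - K Y (S.conn X Z)

/-- The cyclic sum `𝒞_{X,Y,Z} (∇_X K)(Y,Z)`. -/
def cyc (S : RiemSetup F V) (K : V → V → F) (X Y Z : V) : F :=
  S.nabla2 K X Y Z + S.nabla2 K Y Z X + S.nabla2 K Z X Y

/-- `K` is a conformal Killing tensor with associated 1-form `P`:
`(∇_X K)(X,X) = P(X) g(X,X)` for all `X`. -/
def IsConformalKillingWith (S : RiemSetup F V) (K : V → V → F) (P : V → F) : Prop :=
  ∀ X, S.nabla2 K X X X = P X * S.g X X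

/-- A Killing tensor: vanishing cyclic sum of the covariant derivative. -/
def IsKillingTensor (S : RiemSetup F V) (K : V → V → F) : Prop :=
  ∀ X Y Z, S.cyc K X Y Z = 0

/-- A Killing vector field: `L_ξ g = 0`. -/
def IsKillingField (S : RiemSetup F V) (ξ : V) : Prop :=
  ∀ X Y, S.D ξ (S.g X Y) = S.g (S.bracket ξ X) Y + S.g X (S.bracket ξ Y)

/-- Exterior differential of a 1-form. -/
def d1 (S : RiemSetup F V) (θ : V → F) (X Y : V) : F :=
  S.D X (θ Y) - S.D Y (θ X) - θ (S.bracket X Y)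

/-- Lie derivative of a 1-form along a vector field. -/
def lie1 (S : RiemSetup F V) (ξ : V) (θ : V → F) (X : V) : F :=
  S.D ξ (θ X) - θ (S.bracket ξ X)

/-- Covariant derivative `(∇_X φ)(Y)` of an `m`-form (given as an `m`-multilinear
alternating function of vector fields). -/
def nablaForm (S : RiemSetup F V) {m : ℕ} (φ : (Fin m → V) → F) (X : V)
    (Y : Fin m → V) : F :=
  S.D X (φ Y) - ∑ i, φ (Function.update Y i (S.conn X (Y i)))

/-- Interior product `X ⌟ φ`. -/
def inter {m : ℕ} (X : V) (φ : (Fin (m + 1) → V) → F) (Y : Fin m → V) : F :=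
  φ (Fin.cons X Y)

/-- Wedge product `X♭ ∧ ψ` of the metric dual of `X` with an `m`-form `ψ`. -/
def wedge1 (S : RiemSetup F V) {m : ℕ} (X : V) (ψ : (Fin m → V) → F)
    (Y : Fin (m + 1) → V) : F :=
  ∑ i : Fin (m + 1), (-1 : F) ^ (i : ℕ) * S.g X (Y i) * ψ (fun j => Y (i.succAbove j))

/-- Pointwise inner product of two `m`-forms, computed in an orthonormal frame `E`. -/
noncomputable def ipF {n m : ℕ} (E : Fin n → V) (φ ψ : (Fin m → V) → F) : F :=
  ((Nat.factorial m : ℝ)⁻¹) • ∑ f : Fin m → Fin n, φ (E ∘ f) * ψ (E ∘ f)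

/-- Covariant derivative of a 2-form (as a bilinear function of vector fields). -/
def nabla2f (S : RiemSetup F V) (β : V → V → F) (X Y Z : V) : F :=
  S.D X (β Y Z) - β (S.conn X Y) Z - β Y (S.conn X Z)

/-- Codifferential of a 2-form with respect to a frame `E`. -/
def codiff2 (S : RiemSetup F V) {m : ℕ} (E : Fin m → V) (β : V → V → F) (X : V) : F :=
  -∑ a, S.nabla2f β (E a) (E a) X

/-- Riemann curvature tensor `R(X,Y)Z`. -/
def curv (S : RiemSetup F V) (X Y Z : V) : V :=
  S.conn X (S.conn Y Z) - S.conn Y (S.conn X Z) - S.conn (S.bracket X Y) Z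

/-- Ricci tensor, computed in an orthonormal frame `E`. -/
def ricci (S : RiemSetup F V) {N : ℕ} (E : Fin N → V) (X Y : V) : F :=
  ∑ a, S.g (S.curv (E a) X Y) (E a)

end RiemSetup

open RiemSetup
section ONeillAux
variable {F V : Type} [CommRing F] [Algebra ℝ F] [AddCommGroup V] [Module F V]

/-- `g(·,Z)` as an additive monoid hom. -/
def RiemSetup.gL (S : RiemSetup F V) (Z : V) : V →+ F :=
  AddMonoidHom.mk' (fun X => S.g X Z) fun a b => S.g_add_left a b Z

@[simp] lemma RiemSetup.gL_apply (S : RiemSetup F V) (Z X : V) : S.gL Z X = S.g X Z := rfl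

/-- `g(X,·)` as an additive monoid hom. -/
def RiemSetup.gR (S : RiemSetup F V) (X : V) : V →+ F :=
  AddMonoidHom.mk' (S.g X) fun a b => by
    rw [S.g_symm X (a + b), S.g_add_left, S.g_symm a X, S.g_symm b X]

@[simp] lemma RiemSetup.gR_apply (S : RiemSetup F V) (X Y : V) : S.gR X Y = S.g X Y := rfl

/-- `∇_· Z` as an additive monoid hom. -/
def RiemSetup.cL (S : RiemSetup F V) (Z : V) : V →+ V :=
  AddMonoidHom.mk' (fun X => S.conn X Z) fun a b => S.conn_add_left a b Z

@[simp] lemma RiemSetup.cL_apply (S : RiemSetup F V) (Z X : V) : S.cL Z X = S.conn X Z := rfl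

/-- `∇_X ·` as an additive monoid hom. -/
def RiemSetup.cR (S : RiemSetup F V) (X : V) : V →+ V :=
  AddMonoidHom.mk' (S.conn X) (S.conn_add_right X)

@[simp] lemma RiemSetup.cR_apply (S : RiemSetup F V) (X Y : V) : S.cR X Y = S.conn X Y := rfl

/-- `D X` as an additive monoid hom on functions. -/
def RiemSetup.Dm (S : RiemSetup F V) (X : V) : F →+ F :=
  AddMonoidHom.mk' (S.D X) (S.D_add X)

@[simp] lemma RiemSetup.Dm_apply (S : RiemSetup F V) (X : V) (f : F) : S.Dm X f = S.D X f := rfl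

/-- A 1-form (additive in its argument) as an additive monoid hom. -/
def thetaAddHom (θ' : V → F) (h : ∀ X Y, θ' (X + Y) = θ' X + θ' Y) : V →+ F :=
  AddMonoidHom.mk' θ' h

@[simp] lemma thetaAddHom_apply (θ' : V → F) (h : ∀ X Y, θ' (X + Y) = θ' X + θ' Y) (X : V) :
    thetaAddHom θ' h X = θ' X := rfl

end ONeillAux
/-- for the torus-bundle Riemannian submersion, the O'Neill tensor
`T` vanishes and `A_E F = Σ_{i,j} b^{ij}( g(E,TᵢF) ξʲ + g(ξⁱ,F) TⱼE )`. -/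
theorem oneill_tensors_of_torus_bundle {F V : Type} [CommRing F] [Algebra ℝ F]
    [AddCommGroup V] [Module F V]
    (r : ℕ) (S : RiemSetup F V) (θ : Fin r → V → F) (ξ : Fin r → V)
    (b binv : Fin r → Fin r → ℝ) (h' : V → V → F)
    (hb₁ : ∀ i j, (∑ k, b i k * binv k j) = if i = j then 1 else 0)
    (hb₂ : ∀ i j, (∑ k, binv i k * b k j) = if i = j then 1 else 0)
    (hθadd : ∀ i X Y, θ i (X + Y) = θ i X + θ i Y)
    (hθsmul : ∀ i (f : F) X, θ i (f • X) = f * θ i X)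
    (hgdef : ∀ X Y, S.g X Y
      = (∑ i, ∑ j, algebraMap ℝ F (b i j) * (θ i X * θ j Y)) + h' X Y)
    (hθξ : ∀ i s, θ i (ξ s) = algebraMap ℝ F (if i = s then 1 else 0))
    (hgξ : ∀ i E, S.g (ξ i) E = ∑ j, algebraMap ℝ F (b i j) * θ j E)
    (hkill : ∀ i, S.IsKillingField (ξ i))
    (hcomm : ∀ i j, S.bracket (ξ i) (ξ j) = 0)
    (hconst : ∀ i j X, S.D X (S.g (ξ i) (ξ j)) = 0) :
    -- vertical and horizontal projections:
    (∀ E F', (S.conn (∑ i, θ i E • ξ i) (∑ i, θ i F' • ξ i)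
          - ∑ i, θ i (S.conn (∑ i, θ i E • ξ i) (∑ i, θ i F' • ξ i)) • ξ i)
        + (∑ i, θ i (S.conn (∑ i, θ i E • ξ i) (F' - ∑ i, θ i F' • ξ i)) • ξ i)
      = 0) ∧
    (∀ E F', (∑ i, θ i (S.conn (E - ∑ i, θ i E • ξ i) (F' - ∑ i, θ i F' • ξ i)) • ξ i)
        + (S.conn (E - ∑ i, θ i E • ξ i) (∑ i, θ i F' • ξ i)
          - ∑ i, θ i (S.conn (E - ∑ i, θ i E • ξ i) (∑ i, θ i F' • ξ i)) • ξ i)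
      = ∑ i, ∑ j, algebraMap ℝ F (binv i j) •
          (S.g E (S.conn F' (ξ i)) • ξ j + S.g (ξ i) F' • S.conn E (ξ j))) := by
  classical
  -- ### scalar / linearity helpers
  have Dzero : ∀ X, S.D X (0 : F) = 0 := fun X => by simpa using S.D_const X 0
  have gsmulr : ∀ X (f : F) (Y : V), S.g X (f • Y) = f * S.g X Y := fun X f Y => by
    rw [S.g_symm X (f • Y), S.g_smul_left, S.g_symm Y X]
  have gaddr : ∀ X Y Z, S.g X (Y + Z) = S.g X Y + S.g X Z := fun X Y Z =>
    (S.gR X).map_add Y Z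
  have gsubr : ∀ X Y Z, S.g X (Y - Z) = S.g X Y - S.g X Z := fun X Y Z =>
    (S.gR X).map_sub Y Z
  have gsubl : ∀ X Y Z, S.g (X - Y) Z = S.g X Z - S.g Y Z := fun X Y Z =>
    (S.gL Z).map_sub X Y
  have g0l : ∀ X, S.g 0 X = 0 := fun X => (S.gL X).map_zero
  have gsumr : ∀ X (Y : Fin r → V), S.g X (∑ j, Y j) = ∑ j, S.g X (Y j) := fun X Y =>
    map_sum (S.gR X) Y Finset.univ
  have gsuml : ∀ (Y : Fin r → V) Z, S.g (∑ j, Y j) Z = ∑ j, S.g (Y j) Z := fun Y Z =>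
    map_sum (S.gL Z) Y Finset.univ
  have connsumL : ∀ (Y : Fin r → V) Z, S.conn (∑ j, Y j) Z = ∑ j, S.conn (Y j) Z :=
    fun Y Z => map_sum (S.cL Z) Y Finset.univ
  have connsumR : ∀ X (Y : Fin r → V), S.conn X (∑ j, Y j) = ∑ j, S.conn X (Y j) :=
    fun X Y => map_sum (S.cR X) Y Finset.univ
  have connsubL : ∀ X Y Z, S.conn (X - Y) Z = S.conn X Z - S.conn Y Z := fun X Y Z =>
    (S.cL Z).map_sub X Y
  have θsum : ∀ i (Y : Fin r → V), θ i (∑ j, Y j) = ∑ j, θ i (Y j) := fun i Y =>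
    map_sum (thetaAddHom (θ i) (hθadd i)) Y Finset.univ
  have gconnr : ∀ X Y Z, S.g Y (S.conn X Z) = S.D X (S.g Y Z) - S.g (S.conn X Y) Z :=
    fun X Y Z => by linear_combination -S.compat X Y Z
  -- ### g(ξ i, ξ j) = b i j
  have hgξξ : ∀ i j, S.g (ξ i) (ξ j) = algebraMap ℝ F (b i j) := by
    intro i j
    rw [hgξ]
    simp [hθξ, apply_ite (algebraMap ℝ F), mul_ite]
  -- ### skew-symmetry of X ↦ ∇_X ξ i
  have skew : ∀ i X Y, S.g (S.conn X (ξ i)) Y + S.g (S.conn Y (ξ i)) X = 0 := by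
    intro i X Y
    have h1 := S.compat (ξ i) X Y
    have h2 := hkill i X Y
    have t1 : S.conn (ξ i) X = S.bracket (ξ i) X + S.conn X (ξ i) :=
      sub_eq_iff_eq_add.mp (S.torsion_free (ξ i) X)
    have t2 : S.conn (ξ i) Y = S.bracket (ξ i) Y + S.conn Y (ξ i) :=
      sub_eq_iff_eq_add.mp (S.torsion_free (ξ i) Y)
    rw [t1, t2, S.g_add_left, gaddr] at h1
    have e : S.g X (S.conn Y (ξ i)) = S.g (S.conn Y (ξ i)) X := S.g_symm _ _
    linear_combination -h1 + h2 - e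
  have half : ∀ t : F, t + t = 0 → t = 0 := by
    intro t ht
    have h2 : algebraMap ℝ F 2 * t = 0 := by
      rw [map_ofNat]; linear_combination ht
    calc t = algebraMap ℝ F (1 / 2) * (algebraMap ℝ F 2 * t) := by
            rw [← mul_assoc, ← map_mul]; norm_num
      _ = 0 := by rw [h2, mul_zero]
  -- ### the fibers are totally geodesic: ∇_{ξ i} ξ j = 0
  have connsym : ∀ i j, S.conn (ξ i) (ξ j) = S.conn (ξ j) (ξ i) := by
    intro i j
    have h := S.torsion_free (ξ i) (ξ j)
    rw [hcomm] at h
    exact sub_eq_zero.mp h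
  have connξξ : ∀ i j, S.conn (ξ i) (ξ j) = 0 := by
    intro i j
    apply S.g_nondeg
    intro X
    rw [S.g_symm]
    apply half
    have hc := S.compat X (ξ i) (ξ j)
    rw [hconst i j X] at hc
    have s1 := skew i X (ξ j)
    have s2 := skew j X (ξ i)
    have e1 : S.g (ξ i) (S.conn X (ξ j)) = S.g (S.conn X (ξ j)) (ξ i) := S.g_symm _ _
    have e2 : S.g (S.conn (ξ j) (ξ i)) X = S.g (S.conn (ξ i) (ξ j)) X := by
      rw [connsym]
    linear_combination s1 + s2 + hc + e1 - e2
  -- ### ∇_X ξ i is horizontal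
  have gconnξ : ∀ X i j, S.g (S.conn X (ξ i)) (ξ j) = 0 := by
    intro X i j
    have s1 := skew i X (ξ j)
    rw [connξξ j i, g0l] at s1
    simpa using s1
  have gconnξ' : ∀ X i j, S.g (ξ j) (S.conn X (ξ i)) = 0 := fun X i j => by
    rw [S.g_symm]; exact gconnξ X i j
  -- ### inverse matrix identities in F, and symmetry of binv
  have hbF₁ : ∀ i j, (∑ k, algebraMap ℝ F (b i k) * algebraMap ℝ F (binv k j))
      = if i = j then (1 : F) else 0 := by
    intro i j
    have h := congrArg (algebraMap ℝ F) (hb₁ i j)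
    simpa [map_sum, map_mul, apply_ite (algebraMap ℝ F)] using h
  have hbF₂ : ∀ i j, (∑ k, algebraMap ℝ F (binv i k) * algebraMap ℝ F (b k j))
      = if i = j then (1 : F) else 0 := by
    intro i j
    have h := congrArg (algebraMap ℝ F) (hb₂ i j)
    simpa [map_sum, map_mul, apply_ite (algebraMap ℝ F)] using h
  have Csym : ∀ i j, algebraMap ℝ F (binv i j) = algebraMap ℝ F (binv j i) := by
    intro i j
    set B : Matrix (Fin r) (Fin r) F := Matrix.of fun i j => algebraMap ℝ F (b i j) with hB
    set C : Matrix (Fin r) (Fin r) F := Matrix.of fun i j => algebraMap ℝ F (binv i j) with hC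
    have hBC : B * C = 1 := by
      ext i j
      rw [Matrix.mul_apply]
      simpa [hB, hC, Matrix.one_apply] using hbF₁ i j
    have hCB : C * B = 1 := by
      ext i j
      rw [Matrix.mul_apply]
      simpa [hB, hC, Matrix.one_apply] using hbF₂ i j
    have hBsym : B.transpose = B := by
      ext i j
      simp only [Matrix.transpose_apply, hB, Matrix.of_apply]
      rw [← hgξξ, ← hgξξ, S.g_symm]
    have hCsym : C.transpose = C := by
      calc C.transpose = C.transpose * (B * C) := by rw [hBC, mul_one]
        _ = (C.transpose * B.transpose) * C := by rw [hBsym, mul_assoc]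
        _ = (B * C).transpose * C := by rw [Matrix.transpose_mul]
        _ = C := by rw [hBC, Matrix.transpose_one, one_mul]
    have h := congrFun (congrFun hCsym i) j
    simpa [Matrix.transpose_apply, hC] using h.symm
  -- ### inversion of θ through g
  have θinv : ∀ m X, θ m X = ∑ i, algebraMap ℝ F (binv m i) * S.g (ξ i) X := by
    intro m X
    have h1 : ∀ i, algebraMap ℝ F (binv m i) * S.g (ξ i) X
        = ∑ j, algebraMap ℝ F (binv m i) * (algebraMap ℝ F (b i j) * θ j X) := by
      intro i; rw [hgξ, Finset.mul_sum]
    rw [Finset.sum_congr rfl fun i _ => h1 i, Finset.sum_comm]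
    have h2 : ∀ j, (∑ i, algebraMap ℝ F (binv m i) * (algebraMap ℝ F (b i j) * θ j X))
        = (if m = j then (1 : F) else 0) * θ j X := by
      intro j
      calc (∑ i, algebraMap ℝ F (binv m i) * (algebraMap ℝ F (b i j) * θ j X))
          = (∑ i, algebraMap ℝ F (binv m i) * algebraMap ℝ F (b i j)) * θ j X := by
            rw [Finset.sum_mul]; simp only [mul_assoc]
        _ = (if m = j then (1 : F) else 0) * θ j X := by rw [hbF₂ m j]
    rw [Finset.sum_congr rfl fun j _ => h2 j]
    simp [ite_mul]
  -- ### projection identities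
  have hθv : ∀ (c : Fin r → F) m, θ m (∑ j, c j • ξ j) = c m := by
    intro c m
    rw [θsum]
    simp [hθsmul, hθξ, apply_ite (algebraMap ℝ F), mul_ite]
  have connvξ : ∀ X i, S.conn (∑ j, θ j X • ξ j) (ξ i) = 0 := by
    intro X i
    rw [connsumL]
    simp [S.conn_smul_left, connξξ]
  have connhξ : ∀ X i, S.conn (X - ∑ j, θ j X • ξ j) (ξ i) = S.conn X (ξ i) := by
    intro X i
    rw [connsubL, connvξ, sub_zero]
  have gξh : ∀ k X, S.g (ξ k) (X - ∑ j, θ j X • ξ j) = 0 := by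
    intro k X
    rw [gsubr, gsumr, hgξ]
    have h1 : ∀ j, S.g (ξ k) (θ j X • ξ j) = algebraMap ℝ F (b k j) * θ j X := by
      intro j; rw [gsmulr, hgξξ]; ring
    rw [Finset.sum_congr rfl fun j _ => h1 j, sub_self]
  refine ⟨?_, ?_⟩
  · -- ### T = 0
    intro E F'
    have hA : S.conn (∑ i, θ i E • ξ i) (∑ i, θ i F' • ξ i)
        = ∑ j, S.D (∑ i, θ i E • ξ i) (θ j F') • ξ j := by
      rw [connsumR]
      refine Finset.sum_congr rfl fun j _ => ?_
      rw [S.conn_leibniz, connvξ, smul_zero, zero_add]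
    have hC : ∀ i, θ i (S.conn (∑ i, θ i E • ξ i) (F' - ∑ i, θ i F' • ξ i)) = 0 := by
      intro i
      rw [θinv]
      have hk : ∀ k, S.g (ξ k)
          (S.conn (∑ i, θ i E • ξ i) (F' - ∑ i, θ i F' • ξ i)) = 0 := by
        intro k
        rw [connsumL, gsumr]
        refine Finset.sum_eq_zero fun j _ => ?_
        rw [S.conn_smul_left, gsmulr, gconnr, gξh, Dzero, connξξ, g0l, sub_zero, mul_zero]
      simp [hk]
    rw [hA]
    simp only [hθv, hC, zero_smul, Finset.sum_const_zero, sub_self, add_zero]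
  · -- ### the A-tensor formula
    intro E F'
    have key : ∀ i, S.g (ξ i)
          (S.conn (E - ∑ j, θ j E • ξ j) (F' - ∑ j, θ j F' • ξ j))
        = S.g E (S.conn F' (ξ i)) := by
      intro i
      have c1 : S.g (ξ i) (S.conn (E - ∑ j, θ j E • ξ j) (F' - ∑ j, θ j F' • ξ j))
          = - S.g (S.conn (E - ∑ j, θ j E • ξ j) (ξ i)) (F' - ∑ j, θ j F' • ξ j) := by
        rw [gconnr, gξh, Dzero, zero_sub]
      rw [c1, connhξ]
      have s := skew i E (F' - ∑ j, θ j F' • ξ j)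
      rw [connhξ] at s
      have e : S.g (S.conn F' (ξ i)) E = S.g E (S.conn F' (ξ i)) := S.g_symm _ _
      linear_combination -s + e
    have θ1 : ∀ m, θ m (S.conn (E - ∑ j, θ j E • ξ j) (F' - ∑ j, θ j F' • ξ j))
        = ∑ k, algebraMap ℝ F (binv m k) * S.g E (S.conn F' (ξ k)) := by
      intro m
      rw [θinv]
      exact Finset.sum_congr rfl fun k _ => by rw [key k]
    have hD : S.conn (E - ∑ j, θ j E • ξ j) (∑ j, θ j F' • ξ j)
        = (∑ i, θ i F' • S.conn E (ξ i))
          + ∑ i, S.D (E - ∑ j, θ j E • ξ j) (θ i F') • ξ i := by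
      rw [connsumR]
      have e : ∀ i, S.conn (E - ∑ j, θ j E • ξ j) (θ i F' • ξ i)
          = θ i F' • S.conn E (ξ i) + S.D (E - ∑ j, θ j E • ξ j) (θ i F') • ξ i := by
        intro i; rw [S.conn_leibniz, connhξ]
      rw [Finset.sum_congr rfl fun i _ => e i]
      exact Finset.sum_add_distrib
    have θ2 : ∀ m, θ m (S.conn (E - ∑ j, θ j E • ξ j) (∑ j, θ j F' • ξ j))
        = S.D (E - ∑ j, θ j E • ξ j) (θ m F') := by
      intro m
      rw [hD, hθadd m]
      have hA0 : θ m (∑ i, θ i F' • S.conn E (ξ i)) = 0 := by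
        rw [θsum]
        refine Finset.sum_eq_zero fun i _ => ?_
        rw [hθsmul, θinv m]
        simp [gconnξ']
      rw [hA0, zero_add]
      simp only [hθv]
    have hθF : (∑ i, θ i F' • S.conn E (ξ i))
        = ∑ i, (∑ k, algebraMap ℝ F (binv i k) * S.g (ξ k) F') • S.conn E (ξ i) :=
      Finset.sum_congr rfl fun i _ => by rw [← θinv]
    have T1eq : (∑ i, (∑ k, algebraMap ℝ F (binv i k) * S.g E (S.conn F' (ξ k))) • ξ i)
        = ∑ i, ∑ j, algebraMap ℝ F (binv i j) • (S.g E (S.conn F' (ξ i)) • ξ j) := by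
      have e1 : ∀ i : Fin r,
          (∑ k, algebraMap ℝ F (binv i k) * S.g E (S.conn F' (ξ k))) • ξ i
          = ∑ k, algebraMap ℝ F (binv i k) • (S.g E (S.conn F' (ξ k)) • ξ i) := by
        intro i
        rw [Finset.sum_smul]
        exact Finset.sum_congr rfl fun k _ => mul_smul _ _ _
      rw [Finset.sum_congr rfl fun i _ => e1 i, Finset.sum_comm]
      exact Finset.sum_congr rfl fun k _ => Finset.sum_congr rfl fun i _ => by
        rw [Csym i k]
    have T2eq : (∑ i, (∑ k, algebraMap ℝ F (binv i k) * S.g (ξ k) F') • S.conn E (ξ i))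
        = ∑ i, ∑ j, algebraMap ℝ F (binv i j) • (S.g (ξ i) F' • S.conn E (ξ j)) := by
      have e1 : ∀ i : Fin r,
          (∑ k, algebraMap ℝ F (binv i k) * S.g (ξ k) F') • S.conn E (ξ i)
          = ∑ k, algebraMap ℝ F (binv i k) • (S.g (ξ k) F' • S.conn E (ξ i)) := by
        intro i
        rw [Finset.sum_smul]
        exact Finset.sum_congr rfl fun k _ => mul_smul _ _ _
      rw [Finset.sum_congr rfl fun i _ => e1 i, Finset.sum_comm]
      exact Finset.sum_congr rfl fun k _ => Finset.sum_congr rfl fun i _ => by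
        rw [Csym i k]
    simp only [θ1, θ2]
    rw [hD, add_sub_cancel_right, hθF, T1eq, T2eq]
    simp only [smul_add, Finset.sum_add_distrib]
end

section
/- For the torus-bundle metric over a product of almost Hodge manifolds, where dθⱼ = 2π Σₖ (a_{jk}/c_k) ω*ₖ with ωₖ the Kähler forms lifted to P, the horizontal tensors satisfy T̃ᵢ X = π Σⱼ b_{ij} Σₖ (a_{jk}/c_k) J*ₖ X, where J*ₖ is the lift of the almost complex structure Jₖ. -/
open scoped BigOperators

/-!
`ξᵢ` is Killing, so `∇ξᵢ` is skew and `d(ξᵢ♭)(X, Y) = 2 g(∇_X ξᵢ, Y)`. Since `ξᵢ♭ = Σⱼ bᵢⱼ θⱼ`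
with constant coefficients, this gives `2 g(∇_X ξᵢ, Y) = Σⱼ bᵢⱼ dθⱼ(X, Y)`; inserting
`dθⱼ = 2π Σₖ (aⱼₖ/cₖ) g(J*ₖ ·, ·)` and cancelling `2` (a unit in the `ℝ`-algebra `F`) identifies
`g(∇_X ξᵢ, ·)` with `g(π Σⱼ bᵢⱼ Σₖ (aⱼₖ/cₖ) J*ₖ X, ·)`, and nondegeneracy of `g` concludes.
-/

namespace RiemSetup

variable {F V : Type} [CommRing F] [Algebra ℝ F] [AddCommGroup V] [Module F V]
variable (S : RiemSetup F V)

def derivHom (X : V) : F →+ F := AddMonoidHom.mk' (S.D X) (S.D_add X)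

lemma D_sum {ι : Type*} (X : V) (s : Finset ι) (f : ι → F) :
    S.D X (∑ j ∈ s, f j) = ∑ j ∈ s, S.D X (f j) :=
  map_sum (S.derivHom X) f s

def gLeft (Y : V) : V →ₗ[F] F where
  toFun X := S.g X Y
  map_add' X X' := S.g_add_left X X' Y
  map_smul' f X := S.g_smul_left f X Y

lemma g_sum_left {ι : Type*} (s : Finset ι) (X : ι → V) (Y : V) :
    S.g (∑ j ∈ s, X j) Y = ∑ j ∈ s, S.g (X j) Y :=
  map_sum (S.gLeft Y) X s

lemma g_sub_left (X X' Y : V) : S.g (X - X') Y = S.g X Y - S.g X' Y :=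
  map_sub (S.gLeft Y) X X'

lemma g_add_right (X Y Z : V) : S.g X (Y + Z) = S.g X Y + S.g X Z := by
  rw [S.g_symm, S.g_add_left, S.g_symm Y, S.g_symm Z]

lemma g_sub_right (X Y Z : V) : S.g X (Y - Z) = S.g X Y - S.g X Z := by
  rw [S.g_symm, S.g_sub_left, S.g_symm Y, S.g_symm Z]

lemma eq_of_forall_g_eq {Z W : V} (h : ∀ Y, S.g Z Y = S.g W Y) : Z = W :=
  sub_eq_zero.mp <| S.g_nondeg _ fun Y => by rw [S.g_symm, S.g_sub_left, h, sub_self]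

lemma d1_sum_algebraMap_mul {ι : Type*} (s : Finset ι) (b : ι → ℝ) (θ : ι → V → F) (X Y : V) :
    S.d1 (fun Z => ∑ j ∈ s, algebraMap ℝ F (b j) * θ j Z) X Y
      = ∑ j ∈ s, algebraMap ℝ F (b j) * S.d1 (θ j) X Y := by
  simp only [d1, D_sum, S.D_mul, S.D_const, ← Finset.sum_sub_distrib]
  refine Finset.sum_congr rfl fun j _ => ?_
  ring

variable {S}

lemma IsKillingField.g_conn_add_g_conn {ξ : V} (hξ : S.IsKillingField ξ) (X Y : V) :
    S.g (S.conn X ξ) Y + S.g X (S.conn Y ξ) = 0 := by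
  have hcompat := S.compat ξ X Y
  rw [sub_eq_iff_eq_add.mp (S.torsion_free ξ X), sub_eq_iff_eq_add.mp (S.torsion_free ξ Y),
    S.g_add_left, S.g_add_right] at hcompat
  linear_combination hξ X Y - hcompat

lemma IsKillingField.d1_g {ξ : V} (hξ : S.IsKillingField ξ) (X Y : V) :
    S.d1 (S.g ξ) X Y = 2 * S.g (S.conn X ξ) Y := by
  unfold d1
  have hbracket : S.g ξ (S.bracket X Y) = S.g ξ (S.conn X Y) - S.g ξ (S.conn Y X) := by
    rw [← S.torsion_free X Y, S.g_sub_right]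
  linear_combination S.compat X ξ Y - S.compat Y ξ X - hbracket
    - S.g_symm (S.conn Y ξ) X - hξ.g_conn_add_g_conn X Y

lemma IsKillingField.two_mul_g_conn {ξ : V} (hξ : S.IsKillingField ξ) {ι : Type*}
    (s : Finset ι) (b : ι → ℝ) (θ : ι → V → F)
    (hflat : ∀ Z, S.g ξ Z = ∑ j ∈ s, algebraMap ℝ F (b j) * θ j Z) (X Y : V) :
    2 * S.g (S.conn X ξ) Y = ∑ j ∈ s, algebraMap ℝ F (b j) * S.d1 (θ j) X Y := by
  rw [← hξ.d1_g, ← S.d1_sum_algebraMap_mul, funext hflat]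

end RiemSetup

lemma isUnit_two_of_algebra_real (F : Type) [CommRing F] [Algebra ℝ F] : IsUnit (2 : F) := by
  simpa only [map_ofNat] using (isUnit_of_invertible (2 : ℝ)).map (algebraMap ℝ F)

open RiemSetup

theorem T_formula_over_hodge_product_general {F V : Type} [CommRing F] [Algebra ℝ F]
    [AddCommGroup V] [Module F V]
    (r n : ℕ) (S : RiemSetup F V) (θ : Fin r → V → F) (ξ : Fin r → V)
    (b : Fin r → Fin r → ℝ)
    (a : Fin r → Fin n → ℤ) (c : Fin n → ℝ)
    (Jl : Fin n → V → V)  -- the lifted almost complex structures J*ₖ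
    (hgξ : ∀ i E, S.g (ξ i) E = ∑ j, algebraMap ℝ F (b i j) * θ j E)
    (hkill : ∀ i, S.IsKillingField (ξ i))
    -- dθⱼ = 2π Σₖ (a_{jk}/cₖ) ω*ₖ, with ω*ₖ(X,Y) = g(J*ₖX, Y)
    (hdθ : ∀ j X Y, S.d1 (θ j) X Y
      = algebraMap ℝ F (2 * Real.pi) *
          ∑ k, algebraMap ℝ F ((a j k : ℝ) / c k) * S.g (Jl k X) Y) :
    ∀ i X, (∀ j, θ j X = 0) →
      S.conn X (ξ i) = algebraMap ℝ F Real.pi •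
        ∑ j, ∑ k, algebraMap ℝ F (b i j * ((a j k : ℝ) / c k)) • Jl k X := by
  intro i X _
  refine S.eq_of_forall_g_eq fun Y => (isUnit_two_of_algebra_real F).mul_left_cancel ?_
  rw [(hkill i).two_mul_g_conn _ _ _ (hgξ i)]
  simp only [hdθ, S.g_smul_left, S.g_sum_left, map_mul, map_ofNat, Finset.mul_sum]
  refine Finset.sum_congr rfl fun j _ => Finset.sum_congr rfl fun k _ => ?_
  ring

/-- for the torus bundle over a product of almost Hodge manifolds,
with `dθⱼ = 2π Σₖ (a_{jk}/cₖ) ω*ₖ`, the horizontal tensors are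
`T̃ᵢ X = π Σⱼ b_{ij} Σₖ (a_{jk}/cₖ) J*ₖ X`. -/
theorem T_formula_over_hodge_product {F V : Type} [CommRing F] [Algebra ℝ F]
    [AddCommGroup V] [Module F V]
    (r n : ℕ) (S : RiemSetup F V) (θ : Fin r → V → F) (ξ : Fin r → V)
    (b binv : Fin r → Fin r → ℝ)
    (a : Fin r → Fin n → ℤ) (c : Fin n → ℝ) (hc : ∀ k, c k ≠ 0)
    (Jl : Fin n → V → V)  -- the lifted almost complex structures J*ₖ
    (hb₁ : ∀ i j, (∑ k, b i k * binv k j) = if i = j then 1 else 0)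
    (hb₂ : ∀ i j, (∑ k, binv i k * b k j) = if i = j then 1 else 0)
    (hgξ : ∀ i E, S.g (ξ i) E = ∑ j, algebraMap ℝ F (b i j) * θ j E)
    (hkill : ∀ i, S.IsKillingField (ξ i))
    -- dθⱼ = 2π Σₖ (a_{jk}/cₖ) ω*ₖ, with ω*ₖ(X,Y) = g(J*ₖX, Y)
    (hdθ : ∀ j X Y, S.d1 (θ j) X Y
      = algebraMap ℝ F (2 * Real.pi) *
          ∑ k, algebraMap ℝ F ((a j k : ℝ) / c k) * S.g (Jl k X) Y)
    -- the J*ₖ take horizontal values, and TᵢX = ∇_X ξⁱ is horizontal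
    (hJhor : ∀ k X i, θ i (Jl k X) = 0)
    (hThor : ∀ i X, (∀ j, θ j X = 0) → ∀ j, θ j (S.conn X (ξ i)) = 0) :
    ∀ i X, (∀ j, θ j X = 0) →
      S.conn X (ξ i) = algebraMap ℝ F Real.pi •
        ∑ j, ∑ k, algebraMap ℝ F (b i j * ((a j k : ℝ) / c k)) • Jl k X :=
  T_formula_over_hodge_product_general r n S θ ξ b a c Jl hgξ hkill hdθ
end

section
/- In the torus-bundle setting, if a tensor field of the form K* (lift of a tensor from the base, vanishing on vertical vectors) is a conformal Killing tensor on (P,g) with associated 1-form P', then P' = 0, i.e. K* is actually a Killing tensor. In particular the torus bundle metric g admits no strict lifted conformal Killing tensors of this type. -/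
/-!
Since `K*` vanishes on vertical vectors and the fundamental fields satisfy `∇_{ξᵢ} ξᵢ = 0`, every
term of `𝒞∇K*(X, ξᵢ, ξᵢ)` vanishes, so the conformal Killing equation at `(X, ξᵢ, ξᵢ)` reads
`P'(X) bᵢᵢ + 2 P'(ξᵢ) g(ξᵢ, X) = 0`. At `X = ξᵢ` this is `3 P'(ξᵢ) bᵢᵢ = 0`; as `bᵢᵢ > 0`, first
`P'(ξᵢ) = 0` and then `P'(X) = 0`.
-/

open scoped BigOperators

namespace RiemSetup

variable {F V : Type} [CommRing F] [Algebra ℝ F] [AddCommGroup V] [Module F V]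
  (S : RiemSetup F V)

lemma D_zero (X : V) : S.D X 0 = 0 := by
  simpa using S.D_const X 0

lemma cyc_eq_zero_of_vanishing {K : V → V → F} {ξ : V} (hξ : S.conn ξ ξ = 0)
    (hKξ : ∀ Y, K ξ Y = 0 ∧ K Y ξ = 0) (hK0 : ∀ Y, K 0 Y = 0 ∧ K Y 0 = 0) (X : V) :
    S.cyc K X ξ ξ = 0 := by
  simp [cyc, nabla2, hξ, hKξ, hK0, D_zero]

lemma conformalForm_eq_zero_of_cyc_eq_zero {K : V → V → F} {P : V → F} {ξ : V} {c : ℝ}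
    (hc : c ≠ 0) (hgξ : S.g ξ ξ = algebraMap ℝ F c)
    (hconf : ∀ X Y Z, S.cyc K X Y Z = P X * S.g Y Z + P Y * S.g Z X + P Z * S.g X Y)
    (hcyc : ∀ X, S.cyc K X ξ ξ = 0) (X : V) : P X = 0 := by
  have isUnit_algebraMap {a : ℝ} (ha : a ≠ 0) : IsUnit (algebraMap ℝ F a) :=
    (isUnit_iff_ne_zero.2 ha).map _
  have hPξ : P ξ = 0 := by
    have h := hconf ξ ξ ξ
    rw [hcyc, hgξ] at h
    refine (isUnit_algebraMap (mul_ne_zero three_ne_zero hc)).mul_left_eq_zero.1 ?_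
    rw [map_mul, map_ofNat]
    linear_combination -h
  have h := hconf X ξ ξ
  rw [hcyc, hgξ, hPξ] at h
  exact (isUnit_algebraMap hc).mul_left_eq_zero.1 (by linear_combination -h)

end RiemSetup

open RiemSetup
theorem lifted_conformal_killing_is_killing_general {F V : Type} [CommRing F]
    [Algebra ℝ F] [AddCommGroup V] [Module F V]
    (r : ℕ) (hr : 0 < r) (S : RiemSetup F V) (ξ : Fin r → V)
    (b : Matrix (Fin r) (Fin r) ℝ) (hb : b.PosDef)
    (K : V → V → F) (P' : V → F)
    (hgξ : ∀ i j, S.g (ξ i) (ξ j) = algebraMap ℝ F (b i j))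
    (hconnξξ : ∀ i j, S.conn (ξ i) (ξ j) = 0)
    -- K* vanishes whenever one argument is vertical
    (hKvert : ∀ X Y, (∃ f : Fin r → F, X = ∑ i, f i • ξ i) →
      K X Y = 0 ∧ K Y X = 0)
    -- the conformal Killing condition 𝒞∇K = 𝒞 P'·g
    (hconf : ∀ X Y Z, S.cyc K X Y Z
      = P' X * S.g Y Z + P' Y * S.g Z X + P' Z * S.g X Y) :
    ∀ X, P' X = 0 := by
  let i : Fin r := ⟨0, hr⟩
  have hKξ (Y : V) : K (ξ i) Y = 0 ∧ K Y (ξ i) = 0 :=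
    hKvert _ Y ⟨Pi.single i 1, by simp [Pi.single_apply, ite_smul]⟩
  have hK0 (Y : V) : K 0 Y = 0 ∧ K Y 0 = 0 := hKvert 0 Y ⟨0, by simp⟩
  exact S.conformalForm_eq_zero_of_cyc_eq_zero hb.diag_pos.ne' (hgξ i i) hconf
    (S.cyc_eq_zero_of_vanishing (hconnξξ i i) hKξ hK0)

/-- on the torus bundle, a lifted tensor `K*` (vanishing on
vertical vectors) which is conformal Killing with 1-form `P'` has `P' = 0`,
i.e. it is in fact a Killing tensor. -/
theorem lifted_conformal_killing_is_killing {F V : Type} [CommRing F]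
    [Algebra ℝ F] [AddCommGroup V] [Module F V]
    (r : ℕ) (hr : 0 < r) (S : RiemSetup F V) (θ : Fin r → V → F) (ξ : Fin r → V)
    (b : Matrix (Fin r) (Fin r) ℝ) (hb : b.PosDef)
    (K : V → V → F) (P' : V → F)
    (hgξ : ∀ i j, S.g (ξ i) (ξ j) = algebraMap ℝ F (b i j))
    -- vertical and horizontal vectors are orthogonal
    (hghor : ∀ i X, (∀ j, θ j X = 0) → S.g (ξ i) X = 0)
    (hconnξξ : ∀ i j, S.conn (ξ i) (ξ j) = 0)
    (hdec : ∀ X : V, ∃ (f : Fin r → F) (Xh : V),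
      (∀ i, θ i Xh = 0) ∧ X = Xh + ∑ i, f i • ξ i)
    -- K* vanishes whenever one argument is vertical
    (hKvert : ∀ X Y, (∃ f : Fin r → F, X = ∑ i, f i • ξ i) →
      K X Y = 0 ∧ K Y X = 0)
    (hP'add : ∀ X Y, P' (X + Y) = P' X + P' Y)
    (hP'smul : ∀ (f : F) X, P' (f • X) = f * P' X)
    -- the conformal Killing condition 𝒞∇K = 𝒞 P'·g
    (hconf : ∀ X Y Z, S.cyc K X Y Z
      = P' X * S.g Y Z + P' Y * S.g Z X + P' Z * S.g X Y) :
    ∀ X, P' X = 0 :=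
  lifted_conformal_killing_is_killing_general r hr S ξ b hb K P' hgξ hconnξξ hKvert hconf
end

section
/- For the torus bundle (P,g) over a product of almost Hodge manifolds, the horizontal Ricci correction term satisfies Σ_{s,t} b^{st} g(TₛX, TₜY) = π² Σ_{j,l} b_{jl} Σₖ (a_{jk} a_{lk} / cₖ²) gₖ(X,Y) for horizontal vectors X, Y, i.e. it is a constant-coefficient sum of the lifted factor metrics gₖ. -/
open scoped BigOperators

section Helpers

variable {F V : Type} [CommRing F] [Algebra ℝ F] [AddCommGroup V] [Module F V]

private lemma RS_g_zero_left (S : RiemSetup F V) (Y : V) : S.g 0 Y = 0 := by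
  have h := S.g_smul_left 0 0 Y
  simpa using h

private lemma RS_g_sum_left (S : RiemSetup F V) {ι : Type} (s : Finset ι) (f : ι → V) (Y : V) :
    S.g (∑ i ∈ s, f i) Y = ∑ i ∈ s, S.g (f i) Y := by
  classical
  induction s using Finset.cons_induction with
  | empty => simpa using RS_g_zero_left S Y
  | cons a s ha ih => rw [Finset.sum_cons, Finset.sum_cons, S.g_add_left, ih]

private lemma RS_g_sum_right (S : RiemSetup F V) {ι : Type} (s : Finset ι) (X : V) (f : ι → V) :
    S.g X (∑ i ∈ s, f i) = ∑ i ∈ s, S.g X (f i) := by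
  rw [S.g_symm, RS_g_sum_left]
  exact Finset.sum_congr rfl fun i _ => S.g_symm _ _

private lemma RS_g_smul_right (S : RiemSetup F V) (f : F) (X Y : V) :
    S.g X (f • Y) = f * S.g X Y := by
  rw [S.g_symm, S.g_smul_left, S.g_symm]

private lemma sum_comm3 {M : Type*} [AddCommMonoid M] {α β γ : Type*}
    [Fintype α] [Fintype β] [Fintype γ] (f : α → β → γ → M) :
    ∑ x : α, ∑ y : β, ∑ z : γ, f x y z = ∑ z, ∑ x, ∑ y, f x y z :=
  calc ∑ x : α, ∑ y : β, ∑ z : γ, f x y z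
      = ∑ x, ∑ z, ∑ y, f x y z := Finset.sum_congr rfl fun _ _ => Finset.sum_comm
    _ = ∑ z, ∑ x, ∑ y, f x y z := Finset.sum_comm

private lemma sum_comm4 {M : Type*} [AddCommMonoid M] {α β γ δ : Type*}
    [Fintype α] [Fintype β] [Fintype γ] [Fintype δ] (f : α → β → γ → δ → M) :
    ∑ s : α, ∑ t : β, ∑ j : γ, ∑ l : δ, f s t j l
      = ∑ j, ∑ l, ∑ s, ∑ t, f s t j l :=
  calc ∑ s : α, ∑ t : β, ∑ j : γ, ∑ l : δ, f s t j l
      = ∑ s, ∑ j, ∑ t, ∑ l, f s t j l :=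
        Finset.sum_congr rfl fun _ _ => Finset.sum_comm
    _ = ∑ s, ∑ j, ∑ l, ∑ t, f s t j l :=
        Finset.sum_congr rfl fun _ _ => Finset.sum_congr rfl fun _ _ => Finset.sum_comm
    _ = ∑ j, ∑ s, ∑ l, ∑ t, f s t j l := Finset.sum_comm
    _ = ∑ j, ∑ l, ∑ s, ∑ t, f s t j l :=
        Finset.sum_congr rfl fun _ _ => Finset.sum_comm

end Helpers

open RiemSetup

/-- the horizontal Ricci correction term is a constant-coefficient
sum of the lifted factor metrics:
`Σ_{s,t} b^{st} g(TₛX,TₜY) = π² Σ_{j,l} b_{jl} Σₖ (a_{jk}a_{lk}/cₖ²) gₖ(X,Y)`. -/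
theorem horizontal_ricci_correction {F V : Type} [CommRing F] [Algebra ℝ F]
    [AddCommGroup V] [Module F V]
    (r n : ℕ) (S : RiemSetup F V) (θ : Fin r → V → F) (ξ : Fin r → V)
    (b binv : Fin r → Fin r → ℝ) (hbsymm : ∀ i j, b i j = b j i)
    (a : Fin r → Fin n → ℤ) (c : Fin n → ℝ) (hc : ∀ k, c k ≠ 0)
    (Jl : Fin n → V → V) (gl : Fin n → V → V → F)
    (hb₁ : ∀ i j, (∑ k, b i k * binv k j) = if i = j then 1 else 0)
    (hb₂ : ∀ i j, (∑ k, binv i k * b k j) = if i = j then 1 else 0)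
    -- T̃ₛX = π Σⱼ b_{sj} Σₖ (a_{jk}/cₖ) J*ₖX on horizontal fields
    (hTform : ∀ s X, (∀ j, θ j X = 0) →
      S.conn X (ξ s) = algebraMap ℝ F Real.pi •
        ∑ j, ∑ k, algebraMap ℝ F (b s j * ((a j k : ℝ) / c k)) • Jl k X)
    -- images of Jₖ, J_l are orthogonal for k ≠ l
    (horth : ∀ k l X Y, k ≠ l → S.g (Jl k X) (Jl l Y) = 0)
    -- each Jₖ is an isometry onto the k-th factor component:
    (hJiso : ∀ k X Y, S.g (Jl k X) (Jl k Y) = gl k X Y) :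
    ∀ X Y, (∀ i, θ i X = 0) → (∀ i, θ i Y = 0) →
      ∑ s, ∑ t, algebraMap ℝ F (binv s t) * S.g (S.conn X (ξ s)) (S.conn Y (ξ t))
      = algebraMap ℝ F (Real.pi ^ 2) * ∑ j, ∑ l, algebraMap ℝ F (b j l) *
          ∑ k, algebraMap ℝ F ((a j k : ℝ) * (a l k : ℝ) / c k ^ 2) * gl k X Y := by
  intro X Y hX hY
  classical
  -- abbreviation for the real coefficient
  set v : Fin r → Fin n → ℝ :=
    fun s k => Real.pi * ∑ j, b s j * ((a j k : ℝ) / c k) with hv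
  -- rewrite the connection terms in "one sum per factor" form
  have connform : ∀ (s : Fin r) (Z : V), (∀ i, θ i Z = 0) →
      S.conn Z (ξ s) = ∑ k, algebraMap ℝ F (v s k) • Jl k Z := by
    intro s Z hZ
    rw [hTform s Z hZ, Finset.sum_comm, Finset.smul_sum]
    refine Finset.sum_congr rfl fun k _ => ?_
    rw [← Finset.sum_smul, ← map_sum, smul_smul, ← map_mul]
  -- the key pointwise computation of the inner product
  have gkey : ∀ s t, S.g (S.conn X (ξ s)) (S.conn Y (ξ t))
      = ∑ k, algebraMap ℝ F (v s k * v t k) * gl k X Y := by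
    intro s t
    rw [connform s X hX, connform t Y hY, RS_g_sum_left]
    refine Finset.sum_congr rfl fun k _ => ?_
    rw [S.g_smul_left, RS_g_sum_right,
      Finset.sum_eq_single k
        (fun k' _ hk' => by
          rw [RS_g_smul_right, horth k k' X Y (Ne.symm hk'), mul_zero])
        (fun h => absurd (Finset.mem_univ k) h),
      RS_g_smul_right, hJiso, ← mul_assoc, ← map_mul]
  -- the matrix identity  Σ_{s,t} binv_{st} b_{sj} b_{tl} = b_{jl}
  have matid : ∀ j l : Fin r, ∑ s, ∑ t, binv s t * (b s j * b t l) = b j l := by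
    intro j l
    calc ∑ s, ∑ t, binv s t * (b s j * b t l)
        = ∑ s, b s j * ∑ t, binv s t * b t l := by
          refine Finset.sum_congr rfl fun s _ => ?_
          rw [Finset.mul_sum]
          exact Finset.sum_congr rfl fun t _ => by ring
      _ = ∑ s, b s j * (if s = l then 1 else 0) := by
          simp only [hb₂]
      _ = b l j := by simp
      _ = b j l := hbsymm l j
  -- the real-coefficient identity, per factor k
  have realkey : ∀ k, ∑ s, ∑ t, binv s t * (v s k * v t k)
      = Real.pi ^ 2 * ∑ j, ∑ l, b j l * ((a j k : ℝ) * (a l k : ℝ) / c k ^ 2) := by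
    intro k
    have expand : ∀ s t : Fin r, binv s t * (v s k * v t k)
        = ∑ j, ∑ l, (Real.pi ^ 2 * ((a j k : ℝ) * (a l k : ℝ) / c k ^ 2))
            * (binv s t * (b s j * b t l)) := by
      intro s t
      calc binv s t * (v s k * v t k)
          = (Real.pi ^ 2 * binv s t)
              * ((∑ j, b s j * ((a j k : ℝ) / c k)) * (∑ l, b t l * ((a l k : ℝ) / c k))) := by
            rw [hv]; ring
        _ = (Real.pi ^ 2 * binv s t)
              * ∑ j, ∑ l, (b s j * ((a j k : ℝ) / c k)) * (b t l * ((a l k : ℝ) / c k)) := by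
            rw [Finset.sum_mul_sum]
        _ = ∑ j, ∑ l, (Real.pi ^ 2 * ((a j k : ℝ) * (a l k : ℝ) / c k ^ 2))
              * (binv s t * (b s j * b t l)) := by
            rw [Finset.mul_sum]
            refine Finset.sum_congr rfl fun j _ => ?_
            rw [Finset.mul_sum]
            refine Finset.sum_congr rfl fun l _ => ?_
            have hck : (a j k : ℝ) / c k * ((a l k : ℝ) / c k)
                = (a j k : ℝ) * (a l k : ℝ) / c k ^ 2 := by
              rw [div_mul_div_comm, sq]
            rw [← hck]; ring
    calc ∑ s, ∑ t, binv s t * (v s k * v t k)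
        = ∑ s, ∑ t, ∑ j, ∑ l, (Real.pi ^ 2 * ((a j k : ℝ) * (a l k : ℝ) / c k ^ 2))
            * (binv s t * (b s j * b t l)) := by
          exact Finset.sum_congr rfl fun s _ => Finset.sum_congr rfl fun t _ => expand s t
      _ = ∑ j, ∑ l, ∑ s, ∑ t, (Real.pi ^ 2 * ((a j k : ℝ) * (a l k : ℝ) / c k ^ 2))
            * (binv s t * (b s j * b t l)) := sum_comm4 _
      _ = ∑ j, ∑ l, (Real.pi ^ 2 * ((a j k : ℝ) * (a l k : ℝ) / c k ^ 2))
            * ∑ s, ∑ t, binv s t * (b s j * b t l) := by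
          refine Finset.sum_congr rfl fun j _ => Finset.sum_congr rfl fun l _ => ?_
          rw [Finset.mul_sum]
          exact Finset.sum_congr rfl fun s _ => (Finset.mul_sum _ _ _).symm
      _ = Real.pi ^ 2 * ∑ j, ∑ l, b j l * ((a j k : ℝ) * (a l k : ℝ) / c k ^ 2) := by
          rw [Finset.mul_sum]
          refine Finset.sum_congr rfl fun j _ => ?_
          rw [Finset.mul_sum]
          refine Finset.sum_congr rfl fun l _ => ?_
          rw [matid j l]; ring
  -- now put everything together over F
  calc ∑ s, ∑ t, algebraMap ℝ F (binv s t) * S.g (S.conn X (ξ s)) (S.conn Y (ξ t))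
      = ∑ s, ∑ t, ∑ k, algebraMap ℝ F (binv s t * (v s k * v t k)) * gl k X Y := by
        refine Finset.sum_congr rfl fun s _ => Finset.sum_congr rfl fun t _ => ?_
        rw [gkey s t, Finset.mul_sum]
        exact Finset.sum_congr rfl fun k _ => by rw [← mul_assoc, ← map_mul]
    _ = ∑ k, ∑ s, ∑ t, algebraMap ℝ F (binv s t * (v s k * v t k)) * gl k X Y :=
        sum_comm3 _
    _ = ∑ k, algebraMap ℝ F (∑ s, ∑ t, binv s t * (v s k * v t k)) * gl k X Y := by
        refine Finset.sum_congr rfl fun k _ => ?_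
        rw [map_sum, Finset.sum_mul]
        refine Finset.sum_congr rfl fun s _ => ?_
        rw [map_sum, Finset.sum_mul]
    _ = ∑ k, algebraMap ℝ F
          (Real.pi ^ 2 * ∑ j, ∑ l, b j l * ((a j k : ℝ) * (a l k : ℝ) / c k ^ 2))
          * gl k X Y := by
        exact Finset.sum_congr rfl fun k _ => by rw [realkey k]
    _ = ∑ k, ∑ j, ∑ l, algebraMap ℝ F
          (Real.pi ^ 2 * (b j l * ((a j k : ℝ) * (a l k : ℝ) / c k ^ 2))) * gl k X Y := by
        refine Finset.sum_congr rfl fun k _ => ?_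
        rw [Finset.mul_sum, map_sum, Finset.sum_mul]
        refine Finset.sum_congr rfl fun j _ => ?_
        rw [Finset.mul_sum, map_sum, Finset.sum_mul]
    _ = ∑ j, ∑ l, ∑ k, algebraMap ℝ F
          (Real.pi ^ 2 * (b j l * ((a j k : ℝ) * (a l k : ℝ) / c k ^ 2))) * gl k X Y := by
        exact (sum_comm3 fun j l k => algebraMap ℝ F
          (Real.pi ^ 2 * (b j l * ((a j k : ℝ) * (a l k : ℝ) / c k ^ 2))) * gl k X Y).symm
    _ = algebraMap ℝ F (Real.pi ^ 2) * ∑ j, ∑ l, algebraMap ℝ F (b j l) *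
          ∑ k, algebraMap ℝ F ((a j k : ℝ) * (a l k : ℝ) / c k ^ 2) * gl k X Y := by
        rw [Finset.mul_sum]
        refine Finset.sum_congr rfl fun j _ => ?_
        rw [Finset.mul_sum]
        refine Finset.sum_congr rfl fun l _ => ?_
        rw [Finset.mul_sum, Finset.mul_sum]
        refine Finset.sum_congr rfl fun k _ => ?_
        rw [map_mul, map_mul]; ring
end
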